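/- arXiv:2510.07995 — 4 statements merged into one kernel-verified Lean document; each statement's English description precedes it below -/
import Mathlib

section
/- For all θ in [0, π), the maximum over unit vectors x₂ ∈ ℝᵏ of (1/2)(3 - x₂·(x₀+x₁) - x₀·x₁), where x₀, x₁ are unit vectors with x₀·x₁ = cos θ, equals 9/4 - (1/4)(2cos(θ/2) - 1)². -/
open Real
open scoped RealInnerProductSpace

/-!
The objective is an antitone affine function of `⟪x₂, x₀ + x₁⟫`, which by Cauchy–Schwarz is
minimised over the unit sphere at `x₂ = -(x₀ + x₁) / ‖x₀ + x₁‖`, with value `-‖x₀ + x₁‖`; the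
half-angle formula gives `‖x₀ + x₁‖ = 2 cos (θ / 2)`.
-/

theorem isLeast_inner_of_norm_eq_one {E : Type*} [NormedAddCommGroup E] [InnerProductSpace ℝ E]
    {u : E} (hu : u ≠ 0) :
    IsLeast {t : ℝ | ∃ x : E, ‖x‖ = 1 ∧ t = ⟪x, u⟫} (-‖u‖) := by
  refine ⟨⟨-(‖u‖⁻¹ • u), ?_, ?_⟩, ?_⟩
  · rw [norm_neg, norm_smul, norm_inv, norm_norm, inv_mul_cancel₀ (norm_ne_zero_iff.mpr hu)]
  · rw [inner_neg_left, real_inner_smul_left, real_inner_self_eq_norm_sq,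
      inv_mul_eq_div, pow_two, mul_div_cancel_left₀ _ (norm_ne_zero_iff.mpr hu)]
  · rintro t ⟨x, hx, rfl⟩
    have := neg_abs_le ⟪x, u⟫
    have := abs_real_inner_le_norm x u
    rw [hx, one_mul] at this
    linarith

theorem cos_eq_two_mul_cos_half_sq_sub_one (θ : ℝ) : cos θ = 2 * cos (θ / 2) ^ 2 - 1 := by
  rw [← cos_two_mul, mul_div_cancel₀ θ two_ne_zero]

theorem norm_add_eq_two_mul_cos_half {E : Type*} [NormedAddCommGroup E] [InnerProductSpace ℝ E]
    {x y : E} {θ : ℝ} (hθ : θ ∈ Set.Icc (-π) π) (hx : ‖x‖ = 1) (hy : ‖y‖ = 1)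
    (hxy : ⟪x, y⟫ = cos θ) : ‖x + y‖ = 2 * cos (θ / 2) := by
  have hcos : 0 ≤ cos (θ / 2) := cos_nonneg_of_mem_Icc ⟨by linarith [hθ.1], by linarith [hθ.2]⟩
  have hsq : ‖x + y‖ ^ 2 = (2 * cos (θ / 2)) ^ 2 := by
    rw [norm_add_sq_real, hx, hy, hxy, cos_eq_two_mul_cos_half_sq_sub_one θ]
    ring
  exact (sq_eq_sq₀ (norm_nonneg _) (by positivity)).mp hsq

theorem stmt_0_general (k : ℕ) (θ : ℝ) (hθ : θ ∈ Set.Ico 0 π)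
    (x₀ x₁ : EuclideanSpace ℝ (Fin k)) (h0 : ‖x₀‖ = 1) (h1 : ‖x₁‖ = 1)
    (hangle : ⟪x₀, x₁⟫ = Real.cos θ) :
    IsGreatest {v : ℝ | ∃ x₂ : EuclideanSpace ℝ (Fin k), ‖x₂‖ = 1 ∧
        v = (1/2) * (3 - ⟪x₂, x₀ + x₁⟫ - ⟪x₀, x₁⟫)}
      (9/4 - (1/4) * (2 * Real.cos (θ/2) - 1)^2) := by
  have hnorm : ‖x₀ + x₁‖ = 2 * cos (θ / 2) :=
    norm_add_eq_two_mul_cos_half ⟨by linarith [hθ.1, pi_pos], hθ.2.le⟩ h0 h1 hangle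
  have hsum : x₀ + x₁ ≠ 0 := by
    rw [← norm_ne_zero_iff, hnorm]
    have hcos : 0 < cos (θ / 2) :=
      cos_pos_of_mem_Ioo ⟨by linarith [hθ.1, pi_pos], by linarith [hθ.2]⟩
    positivity
  let g : ℝ → ℝ := fun t ↦ (1/2) * (3 - t - ⟪x₀, x₁⟫)
  have hg : Antitone g := fun s t hst ↦ by simp only [g]; linarith
  have hset : {v : ℝ | ∃ x₂ : EuclideanSpace ℝ (Fin k), ‖x₂‖ = 1 ∧
      v = (1/2) * (3 - ⟪x₂, x₀ + x₁⟫ - ⟪x₀, x₁⟫)} =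
      g '' {t : ℝ | ∃ x : EuclideanSpace ℝ (Fin k), ‖x‖ = 1 ∧ t = ⟪x, x₀ + x₁⟫} := by
    ext v
    constructor
    · rintro ⟨x₂, hx₂, rfl⟩; exact ⟨_, ⟨x₂, hx₂, rfl⟩, rfl⟩
    · rintro ⟨_, ⟨x₂, hx₂, rfl⟩, rfl⟩; exact ⟨x₂, hx₂, rfl⟩
  have hvalue : 9/4 - (1/4) * (2 * Real.cos (θ/2) - 1)^2 = g (-‖x₀ + x₁‖) := by
    simp only [g, hnorm, hangle, cos_eq_two_mul_cos_half_sq_sub_one θ]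
    ring
  rw [hset, hvalue]
  exact hg.map_isLeast (isLeast_inner_of_norm_eq_one hsum)

theorem stmt_0 (k : ℕ) (hk : 2 ≤ k) (θ : ℝ) (hθ : θ ∈ Set.Ico 0 π)
    (x₀ x₁ : EuclideanSpace ℝ (Fin k)) (h0 : ‖x₀‖ = 1) (h1 : ‖x₁‖ = 1)
    (hangle : ⟪x₀, x₁⟫ = Real.cos θ) :
    IsGreatest {v : ℝ | ∃ x₂ : EuclideanSpace ℝ (Fin k), ‖x₂‖ = 1 ∧
        v = (1/2) * (3 - ⟪x₂, x₀ + x₁⟫ - ⟪x₀, x₁⟫)}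
      (9/4 - (1/4) * (2 * Real.cos (θ/2) - 1)^2) :=
  stmt_0_general k θ hθ x₀ x₁ h0 h1 hangle
end

section
/- For all θ ∈ [0, π), (2cos(θ/2) - 1)² ≥ (1 - 3θ/(2π))². -/
/-!
The chord of the concave function `cos` on `[0, π/2]` through `0` and `π/3` is
`x ↦ 1 - 3x/(2π)`; since the secant slopes `(cos x - 1)/x` decrease, `cos` lies above this
chord on `[0, π/3]` and below it on `[π/3, π/2]`. With `x = θ/2` this says that
`2 cos(θ/2) - 1` and `1 - 3θ/(2π)` are both nonnegative with the first one larger for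
`θ ≤ 2π/3`, and both nonpositive with the first one smaller beyond.
-/

open Real Set

namespace Real

theorem strictAntiOn_cos_sub_one_div : StrictAntiOn (fun x => (cos x - 1) / x) (Ioc 0 (π / 2)) := by
  intro x hx y hy hxy
  have h0 : (0 : ℝ) ∈ Icc (-(π / 2)) (π / 2) := ⟨by linarith [pi_pos], by linarith [pi_pos]⟩
  have hIcc : Ioc 0 (π / 2) ⊆ Icc (-(π / 2)) (π / 2) := fun z hz =>
    ⟨by linarith [hz.1, pi_pos], hz.2⟩
  simpa only [cos_zero, sub_zero] using
    strictConcaveOn_cos_Icc.secant_strict_mono h0 (hIcc hx) (hIcc hy) hx.1.ne' hy.1.ne' hxy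

theorem cos_sub_one_div_pi_div_three : (cos (π / 3) - 1) / (π / 3) = -3 / (2 * π) := by
  rw [cos_pi_div_three]
  field_simp
  ring

theorem one_sub_le_cos_of_le_pi_div_three {x : ℝ} (hx₀ : 0 ≤ x) (hx : x ≤ π / 3) :
    1 - 3 * x / (2 * π) ≤ cos x := by
  rcases hx₀.eq_or_lt with rfl | hx₀
  · simp
  have hslope : -3 / (2 * π) ≤ (cos x - 1) / x := by
    rw [← cos_sub_one_div_pi_div_three]
    exact strictAntiOn_cos_sub_one_div.antitoneOn ⟨hx₀, by linarith [pi_pos]⟩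
      ⟨by positivity, by linarith [pi_pos]⟩ hx
  rw [div_le_div_iff₀ (by positivity) hx₀] at hslope
  rw [sub_le_comm, le_div_iff₀ (by positivity)]
  linarith

theorem cos_le_one_sub_of_pi_div_three_le {x : ℝ} (hx₀ : π / 3 ≤ x) (hx : x ≤ π / 2) :
    cos x ≤ 1 - 3 * x / (2 * π) := by
  have hxpos : 0 < x := by linarith [pi_pos]
  have hslope : (cos x - 1) / x ≤ -3 / (2 * π) := by
    rw [← cos_sub_one_div_pi_div_three]
    exact strictAntiOn_cos_sub_one_div.antitoneOn ⟨by positivity, by linarith [pi_pos]⟩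
      ⟨hxpos, hx⟩ hx₀
  rw [div_le_div_iff₀ hxpos (by positivity)] at hslope
  rw [le_sub_comm, div_le_iff₀ (by positivity)]
  linarith

end Real

theorem stmt_1 (θ : ℝ) (hθ : θ ∈ Set.Ico 0 π) :
    (2 * Real.cos (θ/2) - 1)^2 ≥ (1 - 3*θ/(2*π))^2 := by
  obtain ⟨hθ₀, hθπ⟩ := hθ
  have hchord : 1 - 3 * θ / (2 * π) = 2 * (1 - 3 * (θ / 2) / (2 * π)) - 1 := by ring
  rcases le_total θ (2 * π / 3) with hθ' | hθ'
  · have hcos := one_sub_le_cos_of_le_pi_div_three (x := θ / 2) (by linarith) (by linarith)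
    have hnonneg : 0 ≤ 1 - 3 * θ / (2 * π) := by
      rw [sub_nonneg, div_le_one (by positivity)]
      linarith
    exact pow_le_pow_left₀ hnonneg (by linarith) 2
  · have hcos := cos_le_one_sub_of_pi_div_three_le (x := θ / 2) (by linarith) (by linarith)
    have hnonpos : 1 - 3 * θ / (2 * π) ≤ 0 := by
      rw [sub_nonpos, le_div_iff₀ (by positivity)]
      linarith
    have hle : 2 * cos (θ / 2) - 1 ≤ 1 - 3 * θ / (2 * π) := by linarith
    simpa only [neg_sq] using pow_le_pow_left₀ (neg_nonneg.2 hnonpos) (neg_le_neg hle) 2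
end

section
/- Let G be a connected d-regular bipartite graph on n vertices with bipartition V = A ∪ B, Laplacian L with largest eigenvalue λ_max = 2d and spectral gap at least Δ to the second largest eigenvalue. For any assignment of unit vectors x₁,...,xₙ ∈ ℝᵏ, letting z = (Σ_{i∈A} xᵢ - Σ_{i∈B} xᵢ)/n and εᵢ the angle between z and xᵢ for i ∈ A, the Max-Cut_k objective satisfies Σ_{ij∈E} (1/2)(1 - xᵢ·xⱼ) ≤ λ_max n/4 - (Δ/(4π²)) Σ_{i∈A} εᵢ². -/
/-!
Write the vectors coordinatewise, `w t = (x i t)ᵢ`: the objective is `(1/4) ∑ₜ w tᵀ L w t`.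
The ±1 vector `s` of the bipartition satisfies `L s = 2d s` and `s ⬝ᵥ w t = n z t`, so splitting
each `w t` along `s` and its orthogonal complement (where the gap bounds the form by `2d - Δ`)
bounds the objective by `dn/2 - (Δ/4) n (1 - ‖z‖²)`. On the other side `n ‖z‖² = ⟪∑ sᵢ xᵢ, z⟫`
forces `∑_{i ∈ A} (1 - cos εᵢ) ≤ n (1 - ‖z‖)`, and `ε² ≤ (π²/2)(1 - cos ε)` on `[0, π]` turns
this into `∑_{i ∈ A} εᵢ² ≤ π² n (1 - ‖z‖²)`.
-/

open Real Matrix Finset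
open scoped RealInnerProductSpace

section Rayleigh

variable {n : Type*} [Fintype n] {L : Matrix n n ℝ} {s : n → ℝ} {lam mu : ℝ}

theorem dotProduct_mulVec_le_of_eigenvector_of_gap (hL : L.IsSymm) (hs : L *ᵥ s = lam • s)
    (hgap : ∀ u, s ⬝ᵥ u = 0 → u ⬝ᵥ L *ᵥ u ≤ mu * (u ⬝ᵥ u)) (w : n → ℝ) :
    w ⬝ᵥ L *ᵥ w ≤ mu * (w ⬝ᵥ w) + (lam - mu) * (s ⬝ᵥ w) ^ 2 / (s ⬝ᵥ s) := by
  rcases eq_or_ne s 0 with rfl | hs0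
  · simpa using hgap w (zero_dotProduct w)
  have hss : s ⬝ᵥ s ≠ 0 := fun h => hs0 (dotProduct_self_eq_zero.mp h)
  set c := (s ⬝ᵥ w) / (s ⬝ᵥ s)
  set u := w - c • s
  have hsu : s ⬝ᵥ u = 0 := by
    simp only [u, dotProduct_sub, dotProduct_smul, smul_eq_mul, c, div_mul_cancel₀ _ hss, sub_self]
  have hus : u ⬝ᵥ s = 0 := by rwa [dotProduct_comm]
  have hsLu : s ⬝ᵥ L *ᵥ u = 0 := by
    rw [dotProduct_mulVec, ← mulVec_transpose, hL.eq, hs, smul_dotProduct, hsu, smul_zero]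
  have hw : w = u + c • s := by simp [u]
  have hquad : w ⬝ᵥ L *ᵥ w = u ⬝ᵥ L *ᵥ u + c ^ 2 * lam * (s ⬝ᵥ s) := by
    simp only [hw, mulVec_add, mulVec_smul, hs, add_dotProduct, dotProduct_add, smul_dotProduct,
      dotProduct_smul, hus, hsLu, smul_eq_mul]
    ring
  have hnorm : w ⬝ᵥ w = u ⬝ᵥ u + c ^ 2 * (s ⬝ᵥ s) := by
    simp only [hw, add_dotProduct, dotProduct_add, smul_dotProduct, dotProduct_smul, hus, hsu,
      smul_eq_mul]
    ring
  have hc : c ^ 2 * (s ⬝ᵥ s) = (s ⬝ᵥ w) ^ 2 / (s ⬝ᵥ s) := by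
    simp only [c]; field_simp
  rw [hquad, hnorm, mul_div_assoc, ← hc]
  linarith [hgap u hsu]

end Rayleigh

section Coordinates

variable {V ι : Type*} [Fintype V]

theorem dotProduct_coord (s : V → ℝ) (x : V → EuclideanSpace ℝ ι) (t : ι) :
    (s ⬝ᵥ fun i => x i t) = (∑ i, s i • x i) t := by
  simp [dotProduct, WithLp.ofLp_sum]

variable [Fintype ι]

theorem sum_coord_dotProduct_self (x : V → EuclideanSpace ℝ ι) :
    ∑ t, (fun i => x i t) ⬝ᵥ (fun i => x i t) = ∑ i, ‖x i‖ ^ 2 := by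
  simp_rw [EuclideanSpace.real_norm_sq_eq, dotProduct, sq]
  exact sum_comm

theorem sum_coord_dotProduct_sq (s : V → ℝ) (x : V → EuclideanSpace ℝ ι) :
    ∑ t, (s ⬝ᵥ fun i => x i t) ^ 2 = ‖∑ i, s i • x i‖ ^ 2 := by
  simp only [dotProduct_coord, EuclideanSpace.real_norm_sq_eq]

theorem sum_coord_quadForm_le {L : Matrix V V ℝ} {s : V → ℝ} {lam mu : ℝ} (hL : L.IsSymm)
    (hs : L *ᵥ s = lam • s) (hgap : ∀ u, s ⬝ᵥ u = 0 → u ⬝ᵥ L *ᵥ u ≤ mu * (u ⬝ᵥ u))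
    (x : V → EuclideanSpace ℝ ι) :
    ∑ t, (fun i => x i t) ⬝ᵥ L *ᵥ (fun i => x i t)
      ≤ mu * ∑ i, ‖x i‖ ^ 2 + (lam - mu) * ‖∑ i, s i • x i‖ ^ 2 / (s ⬝ᵥ s) := by
  calc ∑ t, (fun i => x i t) ⬝ᵥ L *ᵥ (fun i => x i t)
      ≤ ∑ t, (mu * ((fun i => x i t) ⬝ᵥ (fun i => x i t))
          + (lam - mu) * (s ⬝ᵥ fun i => x i t) ^ 2 / (s ⬝ᵥ s)) :=
        sum_le_sum fun t _ => dotProduct_mulVec_le_of_eigenvector_of_gap hL hs hgap _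
    _ = _ := by
        rw [sum_add_distrib, ← mul_sum, ← sum_div, ← mul_sum, sum_coord_dotProduct_self,
          sum_coord_dotProduct_sq]

theorem SimpleGraph.sum_coord_lapMatrix_quadForm [DecidableEq V] (G : SimpleGraph V)
    [DecidableRel G.Adj] (x : V → EuclideanSpace ℝ ι) :
    ∑ t, (fun i => x i t) ⬝ᵥ G.lapMatrix ℝ *ᵥ (fun i => x i t)
      = (∑ i, ∑ j, if G.Adj i j then ‖x i - x j‖ ^ 2 else 0) / 2 := by
  simp_rw [← toLinearMap₂'_apply', lapMatrix_toLinearMap₂', ← sum_div,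
    EuclideanSpace.real_norm_sq_eq]
  rw [sum_comm]
  refine congrArg (· / 2) (sum_congr rfl fun i _ => ?_)
  rw [sum_comm]
  refine sum_congr rfl fun j _ => ?_
  split_ifs <;> simp

theorem SimpleGraph.maxCut_objective_eq [DecidableEq V] (G : SimpleGraph V) [DecidableRel G.Adj]
    {x : V → EuclideanSpace ℝ ι} (hx : ∀ i, ‖x i‖ = 1) :
    (1/2 : ℝ) * ∑ i, ∑ j, (if G.Adj i j then (1/2) * (1 - ⟪x i, x j⟫) else 0)
      = (1/4) * ∑ t, (fun i => x i t) ⬝ᵥ G.lapMatrix ℝ *ᵥ (fun i => x i t) := by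
  simp only [G.sum_coord_lapMatrix_quadForm, norm_sub_sq_real, hx, mul_sum, sum_div]
  refine sum_congr rfl fun i _ => sum_congr rfl fun j _ => ?_
  split_ifs <;> ring

end Coordinates

section SignVector

variable {V : Type*} [Fintype V] [DecidableEq V]

def signVec (A : Finset V) : V → ℝ := fun i => if i ∈ A then 1 else -1

theorem signVec_dotProduct_self (A : Finset V) : signVec A ⬝ᵥ signVec A = Fintype.card V := by
  have hsq : ∀ i, signVec A i * signVec A i = 1 := fun i => by
    by_cases hi : i ∈ A <;> simp [signVec, hi]
  simp [dotProduct, hsq]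

theorem sum_signVec_smul {M : Type*} [AddCommGroup M] [Module ℝ M] (A : Finset V) (x : V → M) :
    ∑ i, signVec A i • x i = ∑ i ∈ A, x i - ∑ i ∈ Aᶜ, x i := by
  rw [← sum_add_sum_compl A, sub_eq_add_neg, ← sum_neg_distrib]
  congr 1 <;> refine sum_congr rfl fun i hi => ?_ <;> simp_all [signVec]

theorem SimpleGraph.lapMatrix_mulVec_signVec (G : SimpleGraph V) [DecidableRel G.Adj]
    {A : Finset V} {d : ℕ} (hreg : ∀ v, G.degree v = d)
    (hbip : ∀ u v, G.Adj u v → (u ∈ A ↔ v ∉ A)) :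
    G.lapMatrix ℝ *ᵥ signVec A = (2 * d : ℝ) • signVec A := by
  funext i
  have hnbr : ∀ j ∈ G.neighborFinset i, signVec A j = -signVec A i := by
    intro j hj
    have := hbip i j ((G.mem_neighborFinset i j).mp hj)
    by_cases hi : i ∈ A <;> simp_all [signVec]
  rw [lapMatrix_mulVec_apply, sum_congr rfl hnbr, sum_const, card_neighborFinset_eq_degree, hreg]
  simp only [Pi.smul_apply, smul_eq_mul, nsmul_eq_mul]
  ring

end SignVector

section Angles

theorem Real.sq_le_pi_sq_div_two_mul_one_sub_cos {θ : ℝ} (h0 : 0 ≤ θ) (hπ : θ ≤ π) :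
    θ ^ 2 ≤ π ^ 2 / 2 * (1 - cos θ) := by
  have hcos := cos_le_one_sub_mul_cos_sq (abs_le.mpr ⟨by linarith [pi_pos], hπ⟩)
  calc θ ^ 2 = π ^ 2 / 2 * (1 - (1 - 2 / π ^ 2 * θ ^ 2)) := by field_simp; ring
    _ ≤ π ^ 2 / 2 * (1 - cos θ) := by gcongr

variable {V E : Type*} [Fintype V] [DecidableEq V] [NormedAddCommGroup E] [InnerProductSpace ℝ E]
  {A : Finset V} {x : V → E} {z : E} {ε : V → ℝ}

theorem sum_one_sub_cos_le (hx : ∀ i, ‖x i‖ = 1)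
    (hz : (Fintype.card V : ℝ) • z = ∑ i ∈ A, x i - ∑ i ∈ Aᶜ, x i) (hz0 : z ≠ 0)
    (hε : ∀ i ∈ A, ⟪x i, z⟫ = ‖z‖ * cos (ε i)) :
    ∑ i ∈ A, (1 - cos (ε i)) ≤ Fintype.card V * (1 - ‖z‖) := by
  have hinner : Fintype.card V * ‖z‖ ^ 2 = ∑ i ∈ A, ⟪x i, z⟫ - ∑ i ∈ Aᶜ, ⟪x i, z⟫ := by
    rw [← real_inner_self_eq_norm_sq, ← real_inner_smul_left, hz, inner_sub_left, sum_inner,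
      sum_inner]
  have hA : ∑ i ∈ A, ⟪x i, z⟫ = ‖z‖ * ∑ i ∈ A, cos (ε i) := by
    rw [mul_sum]; exact sum_congr rfl hε
  have hAc : -∑ i ∈ Aᶜ, ⟪x i, z⟫ ≤ #Aᶜ * ‖z‖ := by
    rw [← sum_neg_distrib, ← nsmul_eq_mul, ← sum_const]
    refine sum_le_sum fun i _ => ?_
    simpa [hx i] using neg_le.mp (neg_le_of_abs_le (abs_real_inner_le_norm (x i) z))
  have hcard : (#A : ℝ) + #Aᶜ = Fintype.card V := by exact_mod_cast card_add_card_compl A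
  have hzpos : 0 < ‖z‖ := norm_pos_iff.mpr hz0
  have hcos : Fintype.card V * ‖z‖ ≤ ∑ i ∈ A, cos (ε i) + #Aᶜ := by
    refine le_of_mul_le_mul_left ?_ hzpos
    nlinarith
  rw [sum_sub_distrib, sum_const, nsmul_one]
  linarith

theorem sum_sq_angle_le (hx : ∀ i, ‖x i‖ = 1)
    (hz : (Fintype.card V : ℝ) • z = ∑ i ∈ A, x i - ∑ i ∈ Aᶜ, x i)
    (hε : ∀ i ∈ A, ε i ∈ Set.Icc 0 π ∧ ⟪x i, z⟫ = ‖z‖ * cos (ε i)) :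
    ∑ i ∈ A, ε i ^ 2 ≤ π ^ 2 * (Fintype.card V * (1 - ‖z‖ ^ 2)) := by
  rcases eq_or_ne z 0 with rfl | hz0
  · have hA : (#A : ℝ) ≤ Fintype.card V := by exact_mod_cast card_le_univ A
    calc ∑ i ∈ A, ε i ^ 2 ≤ ∑ _i ∈ A, π ^ 2 :=
          sum_le_sum fun i hi => pow_le_pow_left₀ (hε i hi).1.1 (hε i hi).1.2 2
      _ ≤ π ^ 2 * (Fintype.card V * (1 - ‖(0 : E)‖ ^ 2)) := by
          rw [sum_const, nsmul_eq_mul, norm_zero]; nlinarith [sq_nonneg π]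
  have hcos := sum_one_sub_cos_le hx hz hz0 fun i hi => (hε i hi).2
  have hnonneg : 0 ≤ Fintype.card V * (1 - ‖z‖) :=
    (sum_nonneg fun i _ => sub_nonneg.mpr (cos_le_one _)).trans hcos
  calc ∑ i ∈ A, ε i ^ 2 ≤ ∑ i ∈ A, π ^ 2 / 2 * (1 - cos (ε i)) :=
        sum_le_sum fun i hi => sq_le_pi_sq_div_two_mul_one_sub_cos (hε i hi).1.1 (hε i hi).1.2
    _ ≤ π ^ 2 / 2 * (Fintype.card V * (1 - ‖z‖)) := by rw [← mul_sum]; gcongr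
    _ ≤ π ^ 2 * (Fintype.card V * (1 - ‖z‖ ^ 2)) := by
        have : 0 ≤ π ^ 2 * (Fintype.card V * (1 - ‖z‖)) * (1 / 2 + ‖z‖) := by positivity
        nlinarith

end Angles

theorem stmt_14 {V : Type*} [Fintype V] [DecidableEq V]
    (G : SimpleGraph V) [DecidableRel G.Adj] (A : Finset V)
    (d : ℕ) (hreg : ∀ v, G.degree v = d)
    (hbip : ∀ u v, G.Adj u v → (u ∈ A ↔ v ∉ A))
    (hconn : G.Connected)
    (Delta : ℝ) (hDelta : 0 < Delta)
    (hgap : ∀ w : V → ℝ,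
      (∑ i, (if i ∈ A then (1 : ℝ) else -1) * w i) = 0 →
      w ⬝ᵥ (G.lapMatrix ℝ).mulVec w ≤ (2 * (d : ℝ) - Delta) * (w ⬝ᵥ w))
    (k : ℕ) (x : V → EuclideanSpace ℝ (Fin k)) (hx : ∀ i, ‖x i‖ = 1)
    (z : EuclideanSpace ℝ (Fin k))
    (hz : z = ((Fintype.card V : ℝ))⁻¹ • (∑ i ∈ A, x i - ∑ i ∈ Aᶜ, x i))
    (ε : V → ℝ) (hε : ∀ i ∈ A, ε i ∈ Set.Icc 0 π ∧ ⟪x i, z⟫ = ‖z‖ * Real.cos (ε i)) :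
    (1/2 : ℝ) * ∑ i, ∑ j, (if G.Adj i j then (1/2) * (1 - ⟪x i, x j⟫) else 0)
      ≤ 2 * (d : ℝ) * (Fintype.card V : ℝ) / 4
        - (Delta / (4 * π^2)) * ∑ i ∈ A, (ε i)^2 := by
  set n := (Fintype.card V : ℝ) with hn_def
  have hn : 0 < n := by have := hconn.nonempty; exact Nat.cast_pos.mpr Fintype.card_pos
  have hnz : n • z = ∑ i ∈ A, x i - ∑ i ∈ Aᶜ, x i := by rw [hz, smul_inv_smul₀ hn.ne']
  have hspec := sum_coord_quadForm_le (G.isSymm_lapMatrix ℝ)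
    (G.lapMatrix_mulVec_signVec hreg hbip) hgap x -- `hgap` is stated for `signVec A`, unfolded
  simp only [sum_signVec_smul, ← hnz, signVec_dotProduct_self, norm_smul, hx, one_pow, sum_const,
    card_univ, nsmul_one, ← hn_def, Real.norm_of_nonneg hn.le] at hspec
  rw [mul_div_assoc, show (n * ‖z‖) ^ 2 / n = n * ‖z‖ ^ 2 by field_simp] at hspec
  have hangle := mul_le_mul_of_nonneg_left (sum_sq_angle_le hx hnz hε)
    (by positivity : 0 ≤ Delta / (4 * π ^ 2))
  rw [show Delta / (4 * π ^ 2) * (π ^ 2 * (n * (1 - ‖z‖ ^ 2))) = Delta / 4 * (n * (1 - ‖z‖ ^ 2))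
    by field_simp] at hangle
  rw [G.maxCut_objective_eq hx]
  linarith
end

section
/- Let y, y' be unit vectors in ℝᵏ⁺¹ of the form y = cos(θ)z + sin(θ)x, y' = cos(θ')z + sin(θ')x' with z a unit vector orthogonal to unit vectors x, x'. Write φ = 2π/3 - θ and φ' = 2π/3 - θ'. Then |(1/2)(1 - y·y') - (3/8)(1 - x·x')| ≤ |φ| + |φ'|. -/
open Real
open scoped RealInnerProductSpace

lemma lip_cos (s t : ℝ) : |Real.cos s - Real.cos t| ≤ |s - t| := by
  rw [Real.cos_sub_cos, abs_mul, abs_mul]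
  have h1 := Real.abs_sin_le_one ((s+t)/2)
  have h2 := Real.abs_sin_le_abs (x := (s-t)/2)
  have h3 : |(s-t)/2| = |s-t|/2 := by rw [abs_div]; norm_num
  have h0 : (0:ℝ) ≤ |Real.sin ((s-t)/2)| := abs_nonneg _
  have h0' : (0:ℝ) ≤ |Real.sin ((s+t)/2)| := abs_nonneg _
  rw [show |(-2:ℝ)| = 2 by norm_num]
  nlinarith

lemma lip_sin (s t : ℝ) : |Real.sin s - Real.sin t| ≤ |s - t| := by
  rw [Real.sin_sub_sin, abs_mul, abs_mul]
  have h1 := Real.abs_cos_le_one ((s+t)/2)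
  have h2 := Real.abs_sin_le_abs (x := (s-t)/2)
  have h3 : |(s-t)/2| = |s-t|/2 := by rw [abs_div]; norm_num
  have h0 : (0:ℝ) ≤ |Real.sin ((s-t)/2)| := abs_nonneg _
  have h0' : (0:ℝ) ≤ |Real.cos ((s+t)/2)| := abs_nonneg _
  rw [show |(2:ℝ)| = 2 by norm_num]
  nlinarith

lemma key_real (c : ℝ) (hc : |c| ≤ 1) (θ θ' : ℝ) :
    |(1/2 : ℝ) * (1 - (Real.cos θ * Real.cos θ' + Real.sin θ * Real.sin θ' * c))
        - (3/8) * (1 - c)| ≤ |2*π/3 - θ| + |2*π/3 - θ'| := by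
  set a : ℝ := 2*π/3 with ha
  have hca : Real.cos a = -(1/2) := by
    rw [ha, show 2*π/3 = π - π/3 by ring, Real.cos_pi_sub, Real.cos_pi_div_three]
  have hs2 : Real.sin a * Real.sin a = 3/4 := by
    have := Real.sin_sq_add_cos_sq a
    nlinarith
  have heq : (1/2 : ℝ) * (1 - (Real.cos θ * Real.cos θ' + Real.sin θ * Real.sin θ' * c))
        - (3/8) * (1 - c)
      = (1/2) * ((Real.cos a * Real.cos a + Real.sin a * Real.sin a * c)
          - (Real.cos θ * Real.cos θ' + Real.sin θ * Real.sin θ' * c)) := by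
    rw [hca, hs2]; ring
  rw [heq]
  have hc1 := lip_cos a θ
  have hc2 := lip_cos a θ'
  have hs1 := lip_sin a θ
  have hs2' := lip_sin a θ'
  have hbca := Real.abs_cos_le_one a
  have hbcθ := Real.abs_cos_le_one θ
  have hbsa := Real.abs_sin_le_one a
  have hbsθ := Real.abs_sin_le_one θ
  -- telescope
  have hmid : (Real.cos a * Real.cos a + Real.sin a * Real.sin a * c)
          - (Real.cos θ * Real.cos θ' + Real.sin θ * Real.sin θ' * c)
      = (Real.cos a - Real.cos θ) * Real.cos a + (Real.sin a - Real.sin θ) * Real.sin a * c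
        + ((Real.cos a - Real.cos θ') * Real.cos θ + (Real.sin a - Real.sin θ') * Real.sin θ * c) := by
    ring
  rw [hmid, abs_mul, abs_of_nonneg (show (0:ℝ) ≤ 1/2 by norm_num)]
  have b1 : |(Real.cos a - Real.cos θ) * Real.cos a + (Real.sin a - Real.sin θ) * Real.sin a * c|
      ≤ 2 * |a - θ| := by
    calc _ ≤ |(Real.cos a - Real.cos θ) * Real.cos a| + |(Real.sin a - Real.sin θ) * Real.sin a * c| :=
        abs_add_le _ _
      _ = |Real.cos a - Real.cos θ| * |Real.cos a| + |Real.sin a - Real.sin θ| * |Real.sin a| * |c| := by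
        rw [abs_mul, abs_mul, abs_mul]
      _ ≤ 2 * |a - θ| := by
        have t1 : |Real.cos a - Real.cos θ| * |Real.cos a| ≤ |a - θ| :=
          le_trans (mul_le_of_le_one_right (abs_nonneg _) hbca) hc1
        have t2 : |Real.sin a - Real.sin θ| * |Real.sin a| * |c| ≤ |a - θ| := by
          calc |Real.sin a - Real.sin θ| * |Real.sin a| * |c|
              ≤ |Real.sin a - Real.sin θ| * |Real.sin a| :=
                mul_le_of_le_one_right (by positivity) hc
            _ ≤ |Real.sin a - Real.sin θ| := mul_le_of_le_one_right (abs_nonneg _) hbsa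
            _ ≤ |a - θ| := hs1
        linarith
  have b2 : |(Real.cos a - Real.cos θ') * Real.cos θ + (Real.sin a - Real.sin θ') * Real.sin θ * c|
      ≤ 2 * |a - θ'| := by
    calc _ ≤ |(Real.cos a - Real.cos θ') * Real.cos θ| + |(Real.sin a - Real.sin θ') * Real.sin θ * c| :=
        abs_add_le _ _
      _ = |Real.cos a - Real.cos θ'| * |Real.cos θ| + |Real.sin a - Real.sin θ'| * |Real.sin θ| * |c| := by
        rw [abs_mul, abs_mul, abs_mul]
      _ ≤ 2 * |a - θ'| := by
        have t1 : |Real.cos a - Real.cos θ'| * |Real.cos θ| ≤ |a - θ'| :=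
          le_trans (mul_le_of_le_one_right (abs_nonneg _) hbcθ) hc2
        have t2 : |Real.sin a - Real.sin θ'| * |Real.sin θ| * |c| ≤ |a - θ'| := by
          calc |Real.sin a - Real.sin θ'| * |Real.sin θ| * |c|
              ≤ |Real.sin a - Real.sin θ'| * |Real.sin θ| :=
                mul_le_of_le_one_right (by positivity) hc
            _ ≤ |Real.sin a - Real.sin θ'| := mul_le_of_le_one_right (abs_nonneg _) hbsθ
            _ ≤ |a - θ'| := hs2'
        linarith
  have habs := abs_add_le ((Real.cos a - Real.cos θ) * Real.cos a + (Real.sin a - Real.sin θ) * Real.sin a * c) ((Real.cos a - Real.cos θ') * Real.cos θ + (Real.sin a - Real.sin θ') * Real.sin θ * c)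
  linarith

theorem stmt_18 (k : ℕ) (x x' z : EuclideanSpace ℝ (Fin (k+1)))
    (hx : ‖x‖ = 1) (hx' : ‖x'‖ = 1) (hz : ‖z‖ = 1)
    (hzx : ⟪z, x⟫ = 0) (hzx' : ⟪z, x'⟫ = 0)
    (θ θ' : ℝ) :
    |(1/2 : ℝ) * (1 - ⟪Real.cos θ • z + Real.sin θ • x,
          Real.cos θ' • z + Real.sin θ' • x'⟫)
        - (3/8) * (1 - ⟪x, x'⟫)|
      ≤ |2*π/3 - θ| + |2*π/3 - θ'| := by
  have hzz : ⟪z, z⟫ = 1 := by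
    rw [real_inner_self_eq_norm_sq, hz]; norm_num
  have hxz : ⟪x, z⟫ = 0 := by rw [real_inner_comm]; exact hzx
  have hinner : ⟪Real.cos θ • z + Real.sin θ • x,
          Real.cos θ' • z + Real.sin θ' • x'⟫
      = Real.cos θ * Real.cos θ' + Real.sin θ * Real.sin θ' * ⟪x, x'⟫ := by
    simp only [inner_add_left, inner_add_right, real_inner_smul_left, real_inner_smul_right,
      hzz, hzx, hzx', hxz]
    ring
  rw [hinner]
  have hc : |⟪x, x'⟫| ≤ 1 := by
    have := abs_real_inner_le_norm x x'
    rw [hx, hx'] at this; simpa using this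
  exact key_real _ hc θ θ'
end
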